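/- arXiv:1405.6863 — 2 statements merged into one kernel-verified Lean document; each statement's English description precedes it below -/
import Mathlib

section
/- In the two-locus Moran model with generator G, define the carré du champ Γ(f,g)(z) = G(fg)(z) − f(z)·G(g)(z) − g(z)·G(f)(z), and write x_u(z) = z_{u·}/N, y_v(z) = z_{·v}/N, d_{uv}(z) = z_{uv}/N − x_u(z) y_v(z). Then there exists a constant C, depending only on K and L, such that for all N ≥ 1, all z ∈ ℕ^{K×L} with Σ_{ij} z_{ij} = N, all u, k ∈ [K] and all v, l ∈ [L]: (i) |Γ(x_u, x_k)(z) − x_u(z)(δ_{uk} − x_k(z))| ≤ C(1 + θ_A + θ_B + ρ)/N; (ii) |Γ(y_v, y_l)(z) − y_v(z)(δ_{vl} − y_l(z))| ≤ C(1 + θ_A + θ_B + ρ)/N; (iii) |Γ(x_u, y_v)(z) − d_{uv}(z)| ≤ C(1 + θ_A + θ_B + ρ)/N. -/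
open scoped BigOperators

/-- Transition rate of the two-locus Moran model: the rate at which a haplotype
`(i,j)` dies and is replaced by a haplotype `(k,l)` when the configuration is `z`. -/
noncomputable def moranRate (N K L : ℕ) (θA θB ρ : ℝ)
    (PA : Fin K → Fin K → ℝ) (PB : Fin L → Fin L → ℝ)
    (z : Fin K → Fin L → ℕ) (i : Fin K) (j : Fin L) (k : Fin K) (l : Fin L) : ℝ :=
  ((z i j : ℝ) / N) *
    (((N : ℝ) ^ 2 / 2) * ((z k l : ℝ) / N)
      + (N : ℝ) * (θA / 2 * PA i k * (if j = l then 1 else 0)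
          + θB / 2 * PB j l * (if i = k then 1 else 0)
          + ρ / 2 * ((∑ l', (z k l' : ℝ)) / N) * ((∑ k', (z k' l : ℝ)) / N)))

/-- The configuration `z − e_{ij} + e_{kl}`. -/
def moranUpdate {K L : ℕ} (z : Fin K → Fin L → ℕ)
    (i : Fin K) (j : Fin L) (k : Fin K) (l : Fin L) : Fin K → Fin L → ℕ :=
  fun i' j' => z i' j' - (if i' = i ∧ j' = j then 1 else 0)
    + (if i' = k ∧ j' = l then 1 else 0)

/-- Generator of the two-locus Moran model acting on `f : ℕ^{K×L} → ℝ`. -/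
noncomputable def moranGen (N K L : ℕ) (θA θB ρ : ℝ)
    (PA : Fin K → Fin K → ℝ) (PB : Fin L → Fin L → ℝ)
    (f : (Fin K → Fin L → ℕ) → ℝ) (z : Fin K → Fin L → ℕ) : ℝ :=
  ∑ i, ∑ j, ∑ k, ∑ l,
    moranRate N K L θA θB ρ PA PB z i j k l * (f (moranUpdate z i j k l) - f z)

/-- Carré du champ operator of the Moran generator:
`Γ(f,g) = G(fg) − f·G(g) − g·G(f)`. -/
noncomputable def moranCarre (N K L : ℕ) (θA θB ρ : ℝ)
    (PA : Fin K → Fin K → ℝ) (PB : Fin L → Fin L → ℝ)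
    (f g : (Fin K → Fin L → ℕ) → ℝ) (z : Fin K → Fin L → ℕ) : ℝ :=
  moranGen N K L θA θB ρ PA PB (fun z' => f z' * g z') z
    - f z * moranGen N K L θA θB ρ PA PB g z
    - g z * moranGen N K L θA θB ρ PA PB f z

/-- The marginal allele frequency `x_u(z) = z_{u·}/N`. -/
noncomputable def moranX (N : ℕ) {K L : ℕ} (z : Fin K → Fin L → ℕ) (u : Fin K) : ℝ :=
  (∑ l, (z u l : ℝ)) / N

/-- The marginal allele frequency `y_v(z) = z_{·v}/N`. -/
noncomputable def moranY (N : ℕ) {K L : ℕ} (z : Fin K → Fin L → ℕ) (v : Fin L) : ℝ :=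
  (∑ k, (z k v : ℝ)) / N

/-- The linkage-disequilibrium coordinate `d_{uv}(z)`. -/
noncomputable def moranLD (N : ℕ) {K L : ℕ} (z : Fin K → Fin L → ℕ)
    (u : Fin K) (v : Fin L) : ℝ :=
  (z u v : ℝ) / N - moranX N z u * moranY N z v


/-!
`Γ(f, g) = Σ rate · Δf · Δg` over all jumps `(i,j) → (k,l)`. The marginals and `d_{uv}` come
from means `f_α = Σ (z_{ab}/N) α_{ab}` of indicators `α` under the empirical distribution
`p = z/N`, and a jump changes `f_α` by exactly `(α_{kl} − α_{ij})/N`. The resampling part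
`z_{ij} z_{kl}/2` of the rate therefore contributes `½ Σ p_{ij} p_{kl} Δα Δβ`, which is exactly
the covariance of `α` and `β` under `p`. The mutation–recombination part has total rate
`N (θ_A + θ_B + ρ)/2`, and for `[0,1]`-valued `α, β` each jump contributes at most `1/N²`, so its
share is at most `(θ_A + θ_B + ρ)/(2N)`.
-/

open Finset

noncomputable def empiricalMean (N : ℕ) {K L : ℕ} (α : Fin K → Fin L → ℝ)
    (z : Fin K → Fin L → ℕ) : ℝ :=
  ∑ a, ∑ b, (z a b : ℝ) / N * α a b

noncomputable def empiricalCov (N : ℕ) {K L : ℕ} (α β : Fin K → Fin L → ℝ)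
    (z : Fin K → Fin L → ℕ) : ℝ :=
  empiricalMean N (α * β) z - empiricalMean N α z * empiricalMean N β z

noncomputable def mutRecRate (N K L : ℕ) (θA θB ρ : ℝ)
    (PA : Fin K → Fin K → ℝ) (PB : Fin L → Fin L → ℝ)
    (z : Fin K → Fin L → ℕ) (i : Fin K) (j : Fin L) (k : Fin K) (l : Fin L) : ℝ :=
  θA / 2 * PA i k * (if j = l then 1 else 0) + θB / 2 * PB j l * (if i = k then 1 else 0)
    + ρ / 2 * moranX N z k * moranY N z l

def indicatorA {K L : ℕ} (u : Fin K) : Fin K → Fin L → ℝ :=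
  fun a _ => if a = u then 1 else 0

def indicatorB {K L : ℕ} (v : Fin L) : Fin K → Fin L → ℝ :=
  fun _ b => if b = v then 1 else 0

section

variable {N K L : ℕ} {θA θB ρ : ℝ} {PA : Fin K → Fin K → ℝ} {PB : Fin L → Fin L → ℝ}
  {z : Fin K → Fin L → ℕ}

theorem sum_sum_mul_mul_sub_mul_sub {ι κ : Type*} [Fintype ι] [Fintype κ] (p α β : ι → κ → ℝ)
    (hp : ∑ i, ∑ j, p i j = 1) :
    ∑ i, ∑ j, ∑ a, ∑ b, p i j * p a b * ((α a b - α i j) * (β a b - β i j))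
      = 2 * (∑ a, ∑ b, p a b * (α a b * β a b)
          - (∑ a, ∑ b, p a b * α a b) * ∑ a, ∑ b, p a b * β a b) := by
  have expand : ∀ i j a b, p i j * p a b * ((α a b - α i j) * (β a b - β i j))
      = p i j * (p a b * (α a b * β a b)) + p i j * (α i j * β i j) * p a b
        - p i j * β i j * (p a b * α a b) - p i j * α i j * (p a b * β a b) := by
    intros; ring
  simp only [expand, sum_add_distrib, sum_sub_distrib, ← mul_sum,
    ← sum_mul, hp]
  ring

theorem sum_sum_div_eq_one (hN : N ≠ 0) (hz : ∑ i, ∑ j, z i j = N) :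
    ∑ i, ∑ j, (z i j : ℝ) / N = 1 := by
  simp only [← sum_div]
  rw [div_eq_one_iff_eq (Nat.cast_ne_zero.2 hN)]
  exact_mod_cast hz

theorem sum_moranX (hN : N ≠ 0) (hz : ∑ i, ∑ j, z i j = N) : ∑ k, moranX N z k = 1 := by
  simpa only [moranX, sum_div] using sum_sum_div_eq_one hN hz

theorem sum_moranY (hN : N ≠ 0) (hz : ∑ i, ∑ j, z i j = N) : ∑ l, moranY N z l = 1 := by
  rw [sum_comm] at hz
  simpa only [moranY, sum_div] using sum_sum_div_eq_one (z := fun j i => z i j) hN hz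

theorem moranRate_eq (hN : N ≠ 0) (i : Fin K) (j : Fin L) (k : Fin K) (l : Fin L) :
    moranRate N K L θA θB ρ PA PB z i j k l
      = z i j * (z k l / 2 + mutRecRate N K L θA θB ρ PA PB z i j k l) := by
  have hN' : (N : ℝ) ≠ 0 := Nat.cast_ne_zero.2 hN
  simp only [moranRate, mutRecRate, moranX, moranY]
  field_simp

theorem mutRecRate_nonneg (hθA : 0 ≤ θA) (hθB : 0 ≤ θB) (hρ : 0 ≤ ρ)
    (hPA : ∀ i k, 0 ≤ PA i k) (hPB : ∀ j l, 0 ≤ PB j l)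
    (i : Fin K) (j : Fin L) (k : Fin K) (l : Fin L) :
    0 ≤ mutRecRate N K L θA θB ρ PA PB z i j k l := by
  have := hPA i k
  have := hPB j l
  unfold mutRecRate moranX moranY
  positivity

theorem sum_mutRecRate (hPA : ∀ i, ∑ k, PA i k = 1) (hPB : ∀ j, ∑ l, PB j l = 1)
    (hN : N ≠ 0) (hz : ∑ i, ∑ j, z i j = N) (i : Fin K) (j : Fin L) :
    ∑ k, ∑ l, mutRecRate N K L θA θB ρ PA PB z i j k l = (θA + θB + ρ) / 2 := by
  simp only [mutRecRate, sum_add_distrib, mul_ite, mul_one, mul_zero, sum_ite_irrel,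
    sum_const_zero, sum_ite_eq, mem_univ, if_true, ← mul_sum, hPA, hPB,
    sum_moranX hN hz, sum_moranY hN hz]
  ring

theorem cast_moranUpdate {i : Fin K} {j : Fin L} (h : z i j ≠ 0) (k : Fin K) (l : Fin L)
    (a : Fin K) (b : Fin L) :
    (moranUpdate z i j k l a b : ℝ)
      = z a b - (if a = i ∧ b = j then 1 else 0) + (if a = k ∧ b = l then 1 else 0) := by
  have hle : (if a = i ∧ b = j then 1 else 0) ≤ z a b := by
    split_ifs with hab
    · obtain ⟨rfl, rfl⟩ := hab
      exact Nat.one_le_iff_ne_zero.2 h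
    · exact Nat.zero_le _
  rw [moranUpdate, Nat.cast_add, Nat.cast_sub hle]
  push_cast
  rfl

theorem empiricalMean_moranUpdate_sub {i : Fin K} {j : Fin L} (h : z i j ≠ 0)
    (α : Fin K → Fin L → ℝ) (k : Fin K) (l : Fin L) :
    empiricalMean N α (moranUpdate z i j k l) - empiricalMean N α z = (α k l - α i j) / N := by
  have hterm : ∀ a b, (moranUpdate z i j k l a b : ℝ) / N * α a b - z a b / N * α a b
      = (if a = k ∧ b = l then α a b / N else 0) - (if a = i ∧ b = j then α a b / N else 0) := by
    intro a b
    rw [cast_moranUpdate h]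
    split_ifs <;> ring
  simp only [empiricalMean, ← sum_sub_distrib, hterm]
  simp only [sum_sub_distrib, ite_and, sum_ite_irrel, sum_const_zero,
    sum_ite_eq', mem_univ, if_true, sub_div]

theorem moranCarre_eq_sum (f g : (Fin K → Fin L → ℕ) → ℝ) :
    moranCarre N K L θA θB ρ PA PB f g z
      = ∑ i, ∑ j, ∑ k, ∑ l, moranRate N K L θA θB ρ PA PB z i j k l *
          ((f (moranUpdate z i j k l) - f z) * (g (moranUpdate z i j k l) - g z)) := by
  simp only [moranCarre, moranGen, mul_sum, ← sum_sub_distrib]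
  refine sum_congr rfl fun i _ => sum_congr rfl fun j _ =>
    sum_congr rfl fun k _ => sum_congr rfl fun l _ => ?_
  ring

theorem moranRate_mul_empiricalMean_update (hN : N ≠ 0) (α β : Fin K → Fin L → ℝ)
    (i : Fin K) (j : Fin L) (k : Fin K) (l : Fin L) :
    moranRate N K L θA θB ρ PA PB z i j k l *
        ((empiricalMean N α (moranUpdate z i j k l) - empiricalMean N α z) *
          (empiricalMean N β (moranUpdate z i j k l) - empiricalMean N β z))
      = z i j / N * (z k l / N) * ((α k l - α i j) * (β k l - β i j)) / 2
        + z i j / N * mutRecRate N K L θA θB ρ PA PB z i j k l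
            * ((α k l - α i j) * (β k l - β i j)) / N := by
  -- for `z i j = 0` the truncated subtraction in `moranUpdate` breaks the jump formula,
  -- but then the rate vanishes
  rcases eq_or_ne (z i j) 0 with h | h
  · simp [moranRate, h]
  · have hN' : (N : ℝ) ≠ 0 := Nat.cast_ne_zero.2 hN
    rw [moranRate_eq hN, empiricalMean_moranUpdate_sub h, empiricalMean_moranUpdate_sub h]
    field_simp

theorem abs_sum_mutRecRate_mul_le (hθA : 0 ≤ θA) (hθB : 0 ≤ θB) (hρ : 0 ≤ ρ)
    (hPA : (∀ i k, 0 ≤ PA i k) ∧ ∀ i, ∑ k, PA i k = 1)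
    (hPB : (∀ j l, 0 ≤ PB j l) ∧ ∀ j, ∑ l, PB j l = 1) (hN : N ≠ 0) (hz : ∑ i, ∑ j, z i j = N)
    {D : Fin K → Fin L → Fin K → Fin L → ℝ} (hD : ∀ i j k l, |D i j k l| ≤ 1) :
    |∑ i, ∑ j, ∑ k, ∑ l, z i j / N * mutRecRate N K L θA θB ρ PA PB z i j k l * D i j k l / N|
      ≤ (θA + θB + ρ) / (2 * N) := by
  set q := mutRecRate N K L θA θB ρ PA PB z
  rw [← Real.norm_eq_abs]
  calc ‖∑ i, ∑ j, ∑ k, ∑ l, z i j / N * q i j k l * D i j k l / N‖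
      ≤ ∑ i, ∑ j, ∑ k, ∑ l, z i j / N * q i j k l / N := by
        refine norm_sum_le_of_le _ fun i _ => norm_sum_le_of_le _ fun j _ =>
          norm_sum_le_of_le _ fun k _ => norm_sum_le_of_le _ fun l _ => ?_
        have hq := mutRecRate_nonneg (N := N) (z := z) hθA hθB hρ hPA.1 hPB.1 i j k l
        have hzq : 0 ≤ z i j / N * q i j k l := by positivity
        rw [Real.norm_eq_abs, abs_div, abs_mul, abs_of_nonneg hzq, Nat.abs_cast]
        exact div_le_div_of_nonneg_right (mul_le_of_le_one_right hzq (hD i j k l)) N.cast_nonneg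
    _ = (θA + θB + ρ) / (2 * N) := by
        have hz' : ∑ i, ∑ j, (z i j : ℝ) = N := by exact_mod_cast hz
        have hN' : (N : ℝ) ≠ 0 := Nat.cast_ne_zero.2 hN
        simp only [← sum_div, ← mul_sum, q, sum_mutRecRate hPA.2 hPB.2 hN hz, ← sum_mul, hz']
        field_simp

theorem abs_moranCarre_empiricalMean_sub_empiricalCov_le (hθA : 0 ≤ θA) (hθB : 0 ≤ θB)
    (hρ : 0 ≤ ρ) (hPA : (∀ i k, 0 ≤ PA i k) ∧ ∀ i, ∑ k, PA i k = 1)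
    (hPB : (∀ j l, 0 ≤ PB j l) ∧ ∀ j, ∑ l, PB j l = 1) (hN : N ≠ 0) (hz : ∑ i, ∑ j, z i j = N)
    {α β : Fin K → Fin L → ℝ} (hα : ∀ a b, α a b ∈ Set.Icc 0 1)
    (hβ : ∀ a b, β a b ∈ Set.Icc 0 1) :
    |moranCarre N K L θA θB ρ PA PB (empiricalMean N α) (empiricalMean N β) z
        - empiricalCov N α β z| ≤ (θA + θB + ρ) / (2 * N) := by
  have hΓ : moranCarre N K L θA θB ρ PA PB (empiricalMean N α) (empiricalMean N β) z
      = empiricalCov N α β z + ∑ i, ∑ j, ∑ k, ∑ l, z i j / N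
          * mutRecRate N K L θA θB ρ PA PB z i j k l * ((α k l - α i j) * (β k l - β i j)) / N := by
    have hcov := sum_sum_mul_mul_sub_mul_sub (fun a b => (z a b : ℝ) / N) α β
      (sum_sum_div_eq_one hN hz)
    rw [moranCarre_eq_sum]
    simp only [moranRate_mul_empiricalMean_update hN, sum_add_distrib, ← sum_div, hcov]
    simp only [empiricalCov, empiricalMean, Pi.mul_apply]
    ring
  have hD (i : Fin K) (j : Fin L) (k : Fin K) (l : Fin L) :
      |(α k l - α i j) * (β k l - β i j)| ≤ 1 := by
    rw [abs_mul]
    exact mul_le_one₀ (abs_sub_le_of_nonneg_of_le (hα k l).1 (hα k l).2 (hα i j).1 (hα i j).2)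
      (abs_nonneg _) (abs_sub_le_of_nonneg_of_le (hβ k l).1 (hβ k l).2 (hβ i j).1 (hβ i j).2)
  rw [hΓ, add_sub_cancel_left]
  exact abs_sum_mutRecRate_mul_le hθA hθB hρ hPA hPB hN hz hD

end

section

variable {N K L : ℕ}

theorem indicatorA_mem_Icc (u : Fin K) (a : Fin K) (b : Fin L) :
    indicatorA u a b ∈ Set.Icc (0 : ℝ) 1 := by
  unfold indicatorA
  split_ifs <;> simp

theorem indicatorB_mem_Icc (v : Fin L) (a : Fin K) (b : Fin L) :
    indicatorB v a b ∈ Set.Icc (0 : ℝ) 1 := by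
  unfold indicatorB
  split_ifs <;> simp

theorem empiricalMean_indicatorA (u : Fin K) :
    empiricalMean N (indicatorA (L := L) u) = fun z => moranX N z u := by
  ext z
  simp [empiricalMean, indicatorA, moranX, sum_div]

theorem empiricalMean_indicatorB (v : Fin L) :
    empiricalMean N (indicatorB (K := K) v) = fun z => moranY N z v := by
  ext z
  simp [empiricalMean, indicatorB, moranY, sum_div]

theorem empiricalCov_indicatorA (z : Fin K → Fin L → ℕ) (u k : Fin K) :
    empiricalCov N (indicatorA u) (indicatorA k) z
      = moranX N z u * ((if u = k then 1 else 0) - moranX N z k) := by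
  unfold empiricalCov
  rcases eq_or_ne u k with rfl | huk
  · have hsq : indicatorA (L := L) u * indicatorA u = indicatorA u := by
      ext a b
      simp [indicatorA]
    rw [hsq, empiricalMean_indicatorA]
    simp only [if_true]
    ring
  · have hzero : indicatorA (L := L) u * indicatorA k = 0 := by
      ext a b
      simp only [indicatorA, Pi.mul_apply, ite_zero_mul_ite_zero, Pi.zero_apply]
      exact if_neg fun h => huk (h.1.symm.trans h.2)
    simp only [hzero, empiricalMean_indicatorA]
    simp [empiricalMean, huk]

theorem empiricalCov_indicatorB (z : Fin K → Fin L → ℕ) (v l : Fin L) :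
    empiricalCov N (indicatorB v) (indicatorB l) z
      = moranY N z v * ((if v = l then 1 else 0) - moranY N z l) := by
  unfold empiricalCov
  rcases eq_or_ne v l with rfl | hvl
  · have hsq : indicatorB (K := K) v * indicatorB v = indicatorB v := by
      ext a b
      simp [indicatorB]
    rw [hsq, empiricalMean_indicatorB]
    simp only [if_true]
    ring
  · have hzero : indicatorB (K := K) v * indicatorB l = 0 := by
      ext a b
      simp only [indicatorB, Pi.mul_apply, ite_zero_mul_ite_zero, Pi.zero_apply]
      exact if_neg fun h => hvl (h.1.symm.trans h.2)
    simp only [hzero, empiricalMean_indicatorB]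
    simp [empiricalMean, hvl]

theorem empiricalCov_indicatorA_indicatorB (z : Fin K → Fin L → ℕ) (u : Fin K) (v : Fin L) :
    empiricalCov N (indicatorA u) (indicatorB v) z = moranLD N z u v := by
  rw [empiricalCov, empiricalMean_indicatorA, empiricalMean_indicatorB, moranLD]
  simp [empiricalMean, indicatorA, indicatorB]

end

theorem moranCarre_marginals_general (K L : ℕ) :
    ∃ C : ℝ, 0 < C ∧
      ∀ (θA θB ρ : ℝ), 0 ≤ θA → 0 ≤ θB → 0 ≤ ρ →
      ∀ (PA : Fin K → Fin K → ℝ) (PB : Fin L → Fin L → ℝ),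
        ((∀ i k, 0 ≤ PA i k) ∧ ∀ i, ∑ k, PA i k = 1) →
        ((∀ j l, 0 ≤ PB j l) ∧ ∀ j, ∑ l, PB j l = 1) →
      ∀ N : ℕ, 1 ≤ N →
      ∀ z : Fin K → Fin L → ℕ, ∑ i, ∑ j, z i j = N →
      ∀ (u k : Fin K) (v l : Fin L),
        |moranCarre N K L θA θB ρ PA PB
              (fun z' => moranX N z' u) (fun z' => moranX N z' k) z
            - moranX N z u * ((if u = k then 1 else 0) - moranX N z k)|
          ≤ C * (1 + θA + θB + ρ) / N ∧
        |moranCarre N K L θA θB ρ PA PB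
              (fun z' => moranY N z' v) (fun z' => moranY N z' l) z
            - moranY N z v * ((if v = l then 1 else 0) - moranY N z l)|
          ≤ C * (1 + θA + θB + ρ) / N ∧
        |moranCarre N K L θA θB ρ PA PB
              (fun z' => moranX N z' u) (fun z' => moranY N z' v) z
            - moranLD N z u v|
          ≤ C * (1 + θA + θB + ρ) / N := by
  refine ⟨1 / 2, one_half_pos, ?_⟩
  intro θA θB ρ hθA hθB hρ PA PB hPA hPB N hN z hz u k v l
  have hrate : (θA + θB + ρ) / (2 * N) ≤ 1 / 2 * (1 + θA + θB + ρ) / N := by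
    rw [show (θA + θB + ρ) / (2 * N) = 1 / 2 * (θA + θB + ρ) / N by ring]
    gcongr
    linarith
  have hbound {α β : Fin K → Fin L → ℝ} (hα : ∀ a b, α a b ∈ Set.Icc 0 1)
      (hβ : ∀ a b, β a b ∈ Set.Icc 0 1) :=
    (abs_moranCarre_empiricalMean_sub_empiricalCov_le hθA hθB hρ hPA hPB
      (Nat.one_le_iff_ne_zero.1 hN) hz hα hβ).trans hrate
  refine ⟨?_, ?_, ?_⟩
  · simpa only [empiricalMean_indicatorA, empiricalCov_indicatorA] using
      hbound (indicatorA_mem_Icc u) (indicatorA_mem_Icc k)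
  · simpa only [empiricalMean_indicatorB, empiricalCov_indicatorB] using
      hbound (indicatorB_mem_Icc v) (indicatorB_mem_Icc l)
  · simpa only [empiricalMean_indicatorA, empiricalMean_indicatorB,
      empiricalCov_indicatorA_indicatorB] using
      hbound (indicatorA_mem_Icc u) (indicatorB_mem_Icc v)

/-- The carré du champ of the marginal allele frequencies reproduces the
Wright–Fisher diffusion matrix up to an error of order `(1 + θ_A + θ_B + ρ)/N`,
with constant depending only on `K` and `L`. -/
theorem moranCarre_marginals (K L : ℕ) (hK : 1 ≤ K) (hL : 1 ≤ L) :
    ∃ C : ℝ, 0 < C ∧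
      ∀ (θA θB ρ : ℝ), 0 ≤ θA → 0 ≤ θB → 0 ≤ ρ →
      ∀ (PA : Fin K → Fin K → ℝ) (PB : Fin L → Fin L → ℝ),
        ((∀ i k, 0 ≤ PA i k) ∧ ∀ i, ∑ k, PA i k = 1) →
        ((∀ j l, 0 ≤ PB j l) ∧ ∀ j, ∑ l, PB j l = 1) →
      ∀ N : ℕ, 1 ≤ N →
      ∀ z : Fin K → Fin L → ℕ, ∑ i, ∑ j, z i j = N →
      ∀ (u k : Fin K) (v l : Fin L),
        |moranCarre N K L θA θB ρ PA PB
              (fun z' => moranX N z' u) (fun z' => moranX N z' k) z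
            - moranX N z u * ((if u = k then 1 else 0) - moranX N z k)|
          ≤ C * (1 + θA + θB + ρ) / N ∧
        |moranCarre N K L θA θB ρ PA PB
              (fun z' => moranY N z' v) (fun z' => moranY N z' l) z
            - moranY N z v * ((if v = l then 1 else 0) - moranY N z l)|
          ≤ C * (1 + θA + θB + ρ) / N ∧
        |moranCarre N K L θA θB ρ PA PB
              (fun z' => moranX N z' u) (fun z' => moranY N z' v) z
            - moranLD N z u v|
          ≤ C * (1 + θA + θB + ρ) / N :=
  moranCarre_marginals_general K L
end

section
/- Let K, L ≥ 1, let q^A : ℕ^K → ℝ and q^B : ℕ^L → ℝ be arbitrary bounded functions, and fix a sample configuration (a,b,c) with c ≥ 2. For ρ > 0 set α = binom(c,2)/ρ and define A = Σ_{i=1}^K Σ_{j=1}^L [binom(c_{ij},2)/binom(c,2)] q^A(a+c_A−e_i) q^B(b+c_B−e_j), B = Σ_{i=1}^K [binom(c_{i·},2)/binom(c,2)] q^A(a+c_A−e_i) q^B(b+c_B), C' = Σ_{j=1}^L [binom(c_{·j},2)/binom(c,2)] q^A(a+c_A) q^B(b+c_B−e_j), and q_0 = q^A(a+c_A) q^B(b+c_B).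 Then there exists a constant C > 0 such that for all ρ ≥ 1: | α·A + (1−α)(1+2α)[q_0 − α·B − α·C'] − q_0 − q_1/ρ | ≤ C/ρ², where q_1 = binom(c,2) q^A(a+c_A) q^B(b+c_B) − q^B(b+c_B) Σ_{i=1}^K binom(c_{i·},2) q^A(a+c_A−e_i) − q^A(a+c_A) Σ_{j=1}^L binom(c_{·j},2) q^B(b+c_B−e_j) + Σ_{i=1}^K Σ_{j=1}^L binom(c_{ij},2) q^A(a+c_A−e_i) q^B(b+c_B−e_j). -/
open scoped BigOperators

/-- `q^A(a + c_A − e_i)` : the first-locus moment function evaluated at the marginal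
configuration with one haplotype of first-locus allele `i` removed. -/
noncomputable def qAm {K L : ℕ} (qA : (Fin K → ℕ) → ℝ)
    (a : Fin K → ℕ) (c : Fin K → Fin L → ℕ) (i : Fin K) : ℝ :=
  qA (fun i' => a i' + ∑ j', c i' j' - if i' = i then 1 else 0)

/-- `q^B(b + c_B − e_j)`. -/
noncomputable def qBm {K L : ℕ} (qB : (Fin L → ℕ) → ℝ)
    (b : Fin L → ℕ) (c : Fin K → Fin L → ℕ) (j : Fin L) : ℝ :=
  qB (fun j' => b j' + ∑ i', c i' j' - if j' = j then 1 else 0)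

/-- `q^A(a + c_A)`. -/
noncomputable def qA0 {K L : ℕ} (qA : (Fin K → ℕ) → ℝ)
    (a : Fin K → ℕ) (c : Fin K → Fin L → ℕ) : ℝ :=
  qA (fun i => a i + ∑ j, c i j)

/-- `q^B(b + c_B)`. -/
noncomputable def qB0 {K L : ℕ} (qB : (Fin L → ℕ) → ℝ)
    (b : Fin L → ℕ) (c : Fin K → Fin L → ℕ) : ℝ :=
  qB (fun j => b j + ∑ i, c i j)

/-- The first-order coefficient `q₁(a,b,c)` of the asymptotic sampling formula. -/
noncomputable def q1expr {K L : ℕ} (qA : (Fin K → ℕ) → ℝ) (qB : (Fin L → ℕ) → ℝ)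
    (a : Fin K → ℕ) (b : Fin L → ℕ) (c : Fin K → Fin L → ℕ) : ℝ :=
  ((∑ i, ∑ j, c i j).choose 2 : ℝ) * qA0 qA a c * qB0 qB b c
    - qB0 qB b c * ∑ i, ((∑ j, c i j).choose 2 : ℝ) * qAm qA a c i
    - qA0 qA a c * ∑ j, ((∑ i, c i j).choose 2 : ℝ) * qBm qB b c j
    + ∑ i, ∑ j, ((c i j).choose 2 : ℝ) * qAm qA a c i * qBm qB b c j

/-!
Writing `α = binom(c,2)/ρ` and `q₁ = binom(c,2)·(q₀ − B − C' + A)`, the error is a polynomial in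
`α` divisible by `α²`; since `0 ≤ α ≤ binom(c,2)` for `ρ ≥ 1`, it is `O(α²) = O(ρ⁻²)`.
-/

theorem mixture_sub_first_order (α A B C q₀ : ℝ) :
    α * A + (1 - α) * (1 + 2 * α) * (q₀ - α * B - α * C) - q₀ - α * (q₀ - B - C + A)
      = α ^ 2 * (2 * α * (B + C) - (2 * q₀ + B + C)) := by
  ring

theorem abs_div_sq_mul_le {n ρ : ℝ} (hn : 0 ≤ n) (hρ : 1 ≤ ρ) (X Y : ℝ) :
    |(n / ρ) ^ 2 * (2 * (n / ρ) * Y - X)| ≤ n ^ 2 * (2 * n * |Y| + |X|) / ρ ^ 2 := by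
  have hρ₀ : 0 < ρ := one_pos.trans_le hρ
  have hα₀ : 0 ≤ n / ρ := div_nonneg hn hρ₀.le
  have hα : n / ρ ≤ n := div_le_self hn hρ
  have hfactor : |2 * (n / ρ) * Y - X| ≤ 2 * n * |Y| + |X| :=
    calc |2 * (n / ρ) * Y - X| ≤ |2 * (n / ρ) * Y| + |X| := abs_sub _ _
      _ = 2 * (n / ρ) * |Y| + |X| := by rw [abs_mul, abs_of_nonneg (by positivity)]
      _ ≤ 2 * n * |Y| + |X| := by gcongr
  calc |(n / ρ) ^ 2 * (2 * (n / ρ) * Y - X)|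
      = n ^ 2 / ρ ^ 2 * |2 * (n / ρ) * Y - X| := by
        rw [abs_mul, abs_of_nonneg (by positivity), div_pow]
    _ ≤ n ^ 2 / ρ ^ 2 * (2 * n * |Y| + |X|) := by gcongr
    _ = n ^ 2 * (2 * n * |Y| + |X|) / ρ ^ 2 := div_mul_eq_mul_div _ _ _

theorem coupling_assembly_general (K L : ℕ)
    (qA : (Fin K → ℕ) → ℝ) (qB : (Fin L → ℕ) → ℝ)
    (a : Fin K → ℕ) (b : Fin L → ℕ) (c : Fin K → Fin L → ℕ)
    (hc : 2 ≤ ∑ i, ∑ j, c i j) :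
    ∃ C : ℝ, 0 < C ∧ ∀ ρ : ℝ, 1 ≤ ρ →
      |(((∑ i, ∑ j, c i j).choose 2 : ℝ) / ρ) *
          (∑ i, ∑ j, (((c i j).choose 2 : ℝ) / ((∑ i', ∑ j', c i' j').choose 2 : ℝ)) *
            qAm qA a c i * qBm qB b c j)
        + (1 - ((∑ i, ∑ j, c i j).choose 2 : ℝ) / ρ) *
            (1 + 2 * (((∑ i, ∑ j, c i j).choose 2 : ℝ) / ρ)) *
            (qA0 qA a c * qB0 qB b c
              - (((∑ i, ∑ j, c i j).choose 2 : ℝ) / ρ) *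
                  (∑ i, (((∑ j, c i j).choose 2 : ℝ) / ((∑ i', ∑ j', c i' j').choose 2 : ℝ)) *
                    qAm qA a c i * qB0 qB b c)
              - (((∑ i, ∑ j, c i j).choose 2 : ℝ) / ρ) *
                  (∑ j, (((∑ i, c i j).choose 2 : ℝ) / ((∑ i', ∑ j', c i' j').choose 2 : ℝ)) *
                    qA0 qA a c * qBm qB b c j))
        - qA0 qA a c * qB0 qB b c - q1expr qA qB a b c / ρ| ≤ C / ρ ^ 2 := by
  set n : ℝ := ((∑ i, ∑ j, c i j).choose 2 : ℝ) with hn_def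
  have hn : 0 < n := Nat.cast_pos.mpr (Nat.choose_pos hc)
  set A := ∑ i, ∑ j, ((c i j).choose 2 : ℝ) / n * qAm qA a c i * qBm qB b c j
  set B := ∑ i, ((∑ j, c i j).choose 2 : ℝ) / n * qAm qA a c i * qB0 qB b c
  set C' := ∑ j, ((∑ i, c i j).choose 2 : ℝ) / n * qA0 qA a c * qBm qB b c j
  set q₀ := qA0 qA a c * qB0 qB b c
  have hq₁ : q1expr qA qB a b c = n * (q₀ - B - C' + A) := by
    simp only [q1expr, A, B, C', q₀, ← hn_def, mul_add, mul_sub, Finset.mul_sum]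
    field_simp
  refine ⟨n ^ 2 * (2 * n * |B + C'| + |2 * q₀ + B + C'|) + 1, by positivity, fun ρ hρ => ?_⟩
  rw [hq₁, mul_div_right_comm, mixture_sub_first_order]
  calc _ ≤ n ^ 2 * (2 * n * |B + C'| + |2 * q₀ + B + C'|) / ρ ^ 2 :=
        abs_div_sq_mul_le hn.le hρ _ _
    _ ≤ _ := by gcongr; linarith

/-- Assembly step of the coalescent coupling proof: the mixture
`α·A + (1−α)(1+2α)[q₀ − α·B − α·C']` agrees with `q₀ + q₁/ρ` up to `O(ρ⁻²)`. -/
theorem coupling_assembly (K L : ℕ) (hK : 1 ≤ K) (hL : 1 ≤ L)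
    (qA : (Fin K → ℕ) → ℝ) (qB : (Fin L → ℕ) → ℝ)
    (MA MB : ℝ) (hqA : ∀ m, |qA m| ≤ MA) (hqB : ∀ m, |qB m| ≤ MB)
    (a : Fin K → ℕ) (b : Fin L → ℕ) (c : Fin K → Fin L → ℕ)
    (hc : 2 ≤ ∑ i, ∑ j, c i j) :
    ∃ C : ℝ, 0 < C ∧ ∀ ρ : ℝ, 1 ≤ ρ →
      |(((∑ i, ∑ j, c i j).choose 2 : ℝ) / ρ) *
          (∑ i, ∑ j, (((c i j).choose 2 : ℝ) / ((∑ i', ∑ j', c i' j').choose 2 : ℝ)) *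
            qAm qA a c i * qBm qB b c j)
        + (1 - ((∑ i, ∑ j, c i j).choose 2 : ℝ) / ρ) *
            (1 + 2 * (((∑ i, ∑ j, c i j).choose 2 : ℝ) / ρ)) *
            (qA0 qA a c * qB0 qB b c
              - (((∑ i, ∑ j, c i j).choose 2 : ℝ) / ρ) *
                  (∑ i, (((∑ j, c i j).choose 2 : ℝ) / ((∑ i', ∑ j', c i' j').choose 2 : ℝ)) *
                    qAm qA a c i * qB0 qB b c)
              - (((∑ i, ∑ j, c i j).choose 2 : ℝ) / ρ) *
                  (∑ j, (((∑ i, c i j).choose 2 : ℝ) / ((∑ i', ∑ j', c i' j').choose 2 : ℝ)) *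
                    qA0 qA a c * qBm qB b c j))
        - qA0 qA a c * qB0 qB b c - q1expr qA qB a b c / ρ| ≤ C / ρ ^ 2 :=
  coupling_assembly_general K L qA qB a b c hc
end
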